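/- If ‖K‖ < 1 and F_λ is strictly convex (equivalently K is injective), then the iterative soft-thresholding sequence x^{(n+1)} = S_λ(x^{(n)} + Kᵀ(y - Kx^{(n)})), x^{(0)} = 0, converges to the unique minimizer of F_λ(x) = ‖Kx - y‖² + 2λ‖x‖₁. -/
import Mathlib


open Finset Filter

/-- scalar soft-thresholding -/
noncomputable def softS (lam u : ℝ) : ℝ := Real.sign u * max (|u| - lam) 0

/-- componentwise soft-thresholding on ℝ^p -/
noncomputable def softV {p : ℕ} (lam : ℝ) (u : Fin p → ℝ) : Fin p → ℝ :=
  fun i => softS lam (u i)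

/-- Euclidean norm on ℝ^n -/
noncomputable def norm2 {n : ℕ} (v : Fin n → ℝ) : ℝ := Real.sqrt (∑ i, (v i) ^ 2)

/-- ℓ¹ norm on ℝ^n -/
noncomputable def normOne {n : ℕ} (v : Fin n → ℝ) : ℝ := ∑ i, |v i|

/-- the ℓ¹-penalized least-squares functional -/
noncomputable def Fl {m p : ℕ} (K : Matrix (Fin m) (Fin p) ℝ) (y : Fin m → ℝ)
    (lam : ℝ) (x : Fin p → ℝ) : ℝ :=
  (norm2 (K.mulVec x - y)) ^ 2 + 2 * lam * normOne x

open Matrix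

lemma softS_eq {lam : ℝ} (hlam : 0 ≤ lam) (u : ℝ) :
    softS lam u = u - max (-lam) (min lam u) := by
  unfold softS
  rcases lt_trichotomy u 0 with hu | hu | hu
  · rw [Real.sign_of_neg hu, abs_of_neg hu]
    rcases le_or_gt u (-lam) with h | h
    · rw [max_eq_left (by linarith), min_eq_right (by linarith),
        max_eq_left (by linarith)]; ring
    · rw [max_eq_right (by linarith), min_eq_right (by linarith),
        max_eq_right (by linarith)]; ring
  · simp [hu, min_eq_right hlam, max_eq_right (neg_nonpos_of_nonneg hlam)]
  · rw [Real.sign_of_pos hu, abs_of_pos hu]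
    rcases le_or_gt lam u with h | h
    · rw [max_eq_left (by linarith), min_eq_left (by linarith),
        max_eq_right (by linarith)]; ring
    · rw [max_eq_right (by linarith), min_eq_right (by linarith),
        max_eq_right (by linarith)]; ring

lemma softS_lipschitz {lam : ℝ} (hlam : 0 ≤ lam) (a b : ℝ) :
    |softS lam a - softS lam b| ≤ |a - b| := by
  rw [softS_eq hlam, softS_eq hlam]
  rw [abs_le]
  constructor <;>
  · rcases le_total a b with h | h <;>
    · simp only [max_def, min_def]
      split_ifs <;> cases abs_cases (a - b) <;> linarith

lemma softS_subgrad {lam : ℝ} (hlam : 0 < lam) {xb hh : ℝ}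
    (hfix : softS lam (xb + hh) = xb) (z : ℝ) :
    hh * (z - xb) ≤ lam * |z| - lam * |xb| := by
  rw [softS_eq hlam.le] at hfix
  have hclamp : max (-lam) (min lam (xb + hh)) = hh := by linarith
  rcases le_total (xb + hh) (-lam) with h | h
  · -- hh = -lam, xb ≤ 0
    rw [min_eq_right (by linarith), max_eq_left (by linarith)] at hclamp
    have hxb : xb ≤ 0 := by linarith
    rw [abs_of_nonpos hxb]
    cases abs_cases z <;> nlinarith
  rcases le_total lam (xb + hh) with h2 | h2
  · rw [min_eq_left h2, max_eq_right (by linarith)] at hclamp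
    have hxb : 0 ≤ xb := by linarith
    rw [abs_of_nonneg hxb]
    cases abs_cases z <;> nlinarith
  · rw [min_eq_right h2, max_eq_right (by linarith)] at hclamp
    have hxb : xb = 0 := by linarith
    subst hxb
    simp only [abs_zero]
    have h1 : |hh| ≤ lam := abs_le.mpr ⟨by linarith, by linarith⟩
    cases abs_cases z <;> cases abs_cases hh <;> nlinarith


lemma norm2_nonneg {n : ℕ} (v : Fin n → ℝ) : 0 ≤ norm2 v := Real.sqrt_nonneg _

lemma norm2_sq {n : ℕ} (v : Fin n → ℝ) : norm2 v ^ 2 = ∑ i, (v i) ^ 2 :=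
  Real.sq_sqrt (Finset.sum_nonneg fun i _ => sq_nonneg _)

lemma norm2_le_of_abs_le {n : ℕ} {a b : Fin n → ℝ} (h : ∀ i, |a i| ≤ |b i|) :
    norm2 a ≤ norm2 b := by
  apply Real.sqrt_le_sqrt
  apply Finset.sum_le_sum
  intro i _
  have h1 := h i
  have h2 := abs_nonneg (a i)
  nlinarith [sq_abs (a i), sq_abs (b i)]

lemma norm2_eq_zero {n : ℕ} {v : Fin n → ℝ} (h : norm2 v = 0) : v = 0 := by
  have h2 : (∑ i, (v i)^2) = 0 := by
    have := norm2_sq v; rw [h] at this; linarith [this]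
  funext i
  have := (Finset.sum_eq_zero_iff_of_nonneg (fun i _ => sq_nonneg (v i))).mp h2 i (Finset.mem_univ i)
  exact pow_eq_zero_iff (by norm_num) |>.mp this

lemma abs_le_norm2 {n : ℕ} (v : Fin n → ℝ) (i : Fin n) : |v i| ≤ norm2 v := by
  have : (v i)^2 ≤ ∑ j, (v j)^2 :=
    Finset.single_le_sum (fun j _ => sq_nonneg (v j)) (Finset.mem_univ i)
  calc |v i| = Real.sqrt ((v i)^2) := (Real.sqrt_sq_eq_abs _).symm
  _ ≤ norm2 v := Real.sqrt_le_sqrt this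

lemma dot_le_norm2 {n : ℕ} (v w : Fin n → ℝ) :
    v ⬝ᵥ w ≤ norm2 v * norm2 w := by
  exact Real.sum_mul_le_sqrt_mul_sqrt Finset.univ v w

lemma norm2_sq_eq_dot {n : ℕ} (v : Fin n → ℝ) : norm2 v ^ 2 = v ⬝ᵥ v := by
  rw [norm2_sq]; simp [dotProduct, sq]

lemma dot_transpose_mulVec {m p : ℕ} (K : Matrix (Fin m) (Fin p) ℝ)
    (d : Fin p → ℝ) (z : Fin m → ℝ) :
    d ⬝ᵥ (K.transpose.mulVec z) = (K.mulVec d) ⬝ᵥ z := by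
  rw [Matrix.dotProduct_mulVec, Matrix.vecMul_transpose, dotProduct_comm]

lemma transpose_bound {m p : ℕ} {K : Matrix (Fin m) (Fin p) ℝ} {c : ℝ} (hc : 0 ≤ c)
    (hK : ∀ x : Fin p → ℝ, norm2 (K.mulVec x) ≤ c * norm2 x) (z : Fin m → ℝ) :
    norm2 (K.transpose.mulVec z) ≤ c * norm2 z := by
  set w := K.transpose.mulVec z with hw
  have h1 : norm2 w ^ 2 = z ⬝ᵥ (K.mulVec w) := by
    rw [norm2_sq_eq_dot, hw, dot_transpose_mulVec, dotProduct_comm]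
  have h2 : z ⬝ᵥ K.mulVec w ≤ norm2 z * (c * norm2 w) :=
    (dot_le_norm2 _ _).trans (by
      have := hK w
      nlinarith [norm2_nonneg z])
  rcases eq_or_lt_of_le (norm2_nonneg w) with h | h
  · rw [← h]; exact mul_nonneg hc (norm2_nonneg z)
  · nlinarith [norm2_nonneg w]

lemma norm2_eq_norm {n : ℕ} (v : Fin n → ℝ) :
    norm2 v = ‖(WithLp.equiv 2 (Fin n → ℝ)).symm v‖ := by
  rw [EuclideanSpace.norm_eq]
  simp [norm2, sq_abs]

lemma exists_alpha {m p : ℕ} {K : Matrix (Fin m) (Fin p) ℝ}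
    (hinj : Function.Injective K.mulVec) :
    ∃ α : ℝ, 0 < α ∧ ∀ v : Fin p → ℝ, α * norm2 v ≤ norm2 (K.mulVec v) := by
  have hker : LinearMap.ker (Matrix.toEuclideanLin K) = ⊥ := by
    rw [LinearMap.ker_eq_bot]
    intro a b hab
    have : K.mulVec ((WithLp.equiv 2 (Fin p → ℝ)) a) =
        K.mulVec ((WithLp.equiv 2 (Fin p → ℝ)) b) := by
      have := congrArg (WithLp.equiv 2 (Fin m → ℝ)) hab
      simpa using this
    have := hinj this
    exact (WithLp.equiv 2 (Fin p → ℝ)).injective this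
  obtain ⟨C, hC0, hC⟩ := LinearMap.exists_antilipschitzWith (Matrix.toEuclideanLin K) hker
  refine ⟨(C : ℝ)⁻¹, by positivity, fun v => ?_⟩
  have h1 := hC.le_mul_dist ((WithLp.equiv 2 (Fin p → ℝ)).symm v) 0
  simp only [map_zero, dist_zero_right] at h1
  rw [norm2_eq_norm v, norm2_eq_norm (K.mulVec v)]
  have h2 : Matrix.toEuclideanLin K ((WithLp.equiv 2 (Fin p → ℝ)).symm v)
      = (WithLp.equiv 2 (Fin m → ℝ)).symm (K.mulVec v) := rfl
  rw [h2] at h1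
  rw [inv_mul_le_iff₀ (by exact_mod_cast hC0)] at *
  · calc ‖(WithLp.equiv 2 (Fin p → ℝ)).symm v‖ ≤ _ := h1
    _ = _ := by ring_nf
  all_goals norm_num


lemma norm2_sub_sq {n : ℕ} (d w : Fin n → ℝ) :
    norm2 (d - w) ^ 2 = norm2 d ^ 2 - d ⬝ᵥ w - w ⬝ᵥ d + norm2 w ^ 2 := by
  rw [norm2_sq_eq_dot, norm2_sq_eq_dot, norm2_sq_eq_dot, sub_dotProduct,
    dotProduct_sub, dotProduct_sub]
  ring

lemma contract_step {m p : ℕ} (K : Matrix (Fin m) (Fin p) ℝ) (y : Fin m → ℝ)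
    {lam c α : ℝ} (hlam : 0 < lam) (hc0 : 0 ≤ c) (hc1 : c < 1)
    (hK : ∀ x : Fin p → ℝ, norm2 (K.mulVec x) ≤ c * norm2 x)
    (hα : 0 < α) (hα1 : α ≤ 1)
    (hαK : ∀ v : Fin p → ℝ, α * norm2 v ≤ norm2 (K.mulVec v)) (a b : Fin p → ℝ) :
    norm2 (softV lam (a + K.transpose.mulVec (y - K.mulVec a)) -
        softV lam (b + K.transpose.mulVec (y - K.mulVec b))) ≤
      Real.sqrt (1 - α ^ 2) * norm2 (a - b) := by
  set d := a - b with hd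
  set u := a + K.transpose.mulVec (y - K.mulVec a) with hu
  set v := b + K.transpose.mulVec (y - K.mulVec b) with hv
  have harg : u - v = d - K.transpose.mulVec (K.mulVec d) := by
    rw [hu, hv, hd]
    funext i
    simp [Matrix.mulVec_sub, Matrix.sub_mulVec, Matrix.mulVec_sub]
    ring
  have step1 : norm2 (softV lam u - softV lam v) ≤ norm2 (u - v) := by
    apply norm2_le_of_abs_le
    intro i
    simpa [softV, Pi.sub_apply] using softS_lipschitz hlam.le (u i) (v i)
  have step2 : norm2 (u - v) ^ 2 ≤ (1 - α ^ 2) * norm2 d ^ 2 := by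
    rw [harg]
    set w := K.transpose.mulVec (K.mulVec d) with hw
    have hdw : d ⬝ᵥ w = (K.mulVec d) ⬝ᵥ (K.mulVec d) := by
      rw [hw, dot_transpose_mulVec]
    have hwd : w ⬝ᵥ d = (K.mulVec d) ⬝ᵥ (K.mulVec d) := by
      rw [dotProduct_comm, hdw]
    have e1 : norm2 (d - w) ^ 2 = norm2 d ^ 2 - 2 * (norm2 (K.mulVec d) ^ 2) + norm2 w ^ 2 := by
      rw [norm2_sub_sq, hdw, hwd, norm2_sq_eq_dot (K.mulVec d)]
      ring
    have e2 : norm2 w ≤ c * norm2 (K.mulVec d) := transpose_bound hc0 hK _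
    have e3 : α * norm2 d ≤ norm2 (K.mulVec d) := hαK d
    have hc2 : c ^ 2 ≤ 1 := by nlinarith
    have e4 : norm2 w ^ 2 ≤ norm2 (K.mulVec d) ^ 2 := by
      have h1 : norm2 w ^ 2 ≤ (c * norm2 (K.mulVec d)) ^ 2 :=
        pow_le_pow_left₀ (norm2_nonneg w) e2 2
      have h2 : (c * norm2 (K.mulVec d)) ^ 2 ≤ norm2 (K.mulVec d) ^ 2 := by
        have := sq_nonneg (norm2 (K.mulVec d))
        nlinarith
      linarith
    have e5 : α ^ 2 * norm2 d ^ 2 ≤ norm2 (K.mulVec d) ^ 2 := by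
      nlinarith [mul_nonneg hα.le (norm2_nonneg d)]
    nlinarith [e1, e4, e5]
  calc norm2 (softV lam u - softV lam v) ≤ norm2 (u - v) := step1
  _ = Real.sqrt (norm2 (u - v) ^ 2) := by
      rw [Real.sqrt_sq (norm2_nonneg _)]
  _ ≤ Real.sqrt ((1 - α ^ 2) * norm2 d ^ 2) := Real.sqrt_le_sqrt step2
  _ = Real.sqrt (1 - α ^ 2) * norm2 d := by
      rw [Real.sqrt_mul (by nlinarith), Real.sqrt_sq (norm2_nonneg _)]



lemma norm2_add_sq {n : ℕ} (d w : Fin n → ℝ) :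
    norm2 (d + w) ^ 2 = norm2 d ^ 2 + d ⬝ᵥ w + w ⬝ᵥ d + norm2 w ^ 2 := by
  rw [norm2_sq_eq_dot, norm2_sq_eq_dot, norm2_sq_eq_dot, add_dotProduct,
    dotProduct_add, dotProduct_add]
  ring

lemma fixed_point_min {m p : ℕ} (K : Matrix (Fin m) (Fin p) ℝ) (y : Fin m → ℝ)
    {lam : ℝ} (hlam : 0 < lam) {xb : Fin p → ℝ}
    (hfix : softV lam (xb + K.transpose.mulVec (y - K.mulVec xb)) = xb) (z : Fin p → ℝ) :
    Fl K y lam xb + norm2 (K.mulVec (z - xb)) ^ 2 ≤ Fl K y lam z := by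
  set h := K.transpose.mulVec (y - K.mulVec xb) with hh
  have e0 : K.mulVec z - y = (K.mulVec xb - y) + K.mulVec (z - xb) := by
    rw [Matrix.mulVec_sub]
    abel
  have e1 : norm2 (K.mulVec z - y) ^ 2 = norm2 (K.mulVec xb - y) ^ 2
      + (K.mulVec xb - y) ⬝ᵥ (K.mulVec (z - xb))
      + (K.mulVec (z - xb)) ⬝ᵥ (K.mulVec xb - y)
      + norm2 (K.mulVec (z - xb)) ^ 2 := by
    rw [e0, norm2_add_sq]
  have e2 : (K.mulVec (z - xb)) ⬝ᵥ (K.mulVec xb - y) = -((z - xb) ⬝ᵥ h) := by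
    rw [← dot_transpose_mulVec, hh]
    rw [show K.mulVec xb - y = -(y - K.mulVec xb) by abel, Matrix.mulVec_neg,
      dotProduct_neg]
  have e3 : (K.mulVec xb - y) ⬝ᵥ (K.mulVec (z - xb)) = -((z - xb) ⬝ᵥ h) := by
    rw [dotProduct_comm, e2]
  have hsum : (z - xb) ⬝ᵥ h = ∑ i, h i * (z i - xb i) := by
    simp [dotProduct, mul_comm]
  have key : ∑ i, h i * (z i - xb i) ≤ ∑ i, (lam * |z i| - lam * |xb i|) := by
    apply Finset.sum_le_sum
    intro i _
    apply softS_subgrad hlam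
    simpa [softV] using congrFun hfix i
  have hsum2 : ∑ i, (lam * |z i| - lam * |xb i|) = lam * normOne z - lam * normOne xb := by
    simp [normOne, Finset.sum_sub_distrib, Finset.mul_sum]
  unfold Fl
  rw [e1, e2, e3, hsum]
  linarith [key]

noncomputable def Tmap {m p : ℕ} (K : Matrix (Fin m) (Fin p) ℝ) (y : Fin m → ℝ)
    (lam : ℝ) (v : Fin p → ℝ) : Fin p → ℝ :=
  softV lam (v + K.transpose.mulVec (y - K.mulVec v))

lemma norm2_sub_comm {n : ℕ} (a b : Fin n → ℝ) : norm2 (a - b) = norm2 (b - a) := by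
  unfold norm2
  congr 1
  apply Finset.sum_congr rfl
  intro i _
  simp only [Pi.sub_apply]
  ring

lemma dist_le_norm2 {n : ℕ} (a b : Fin n → ℝ) : dist a b ≤ norm2 (a - b) := by
  rw [dist_pi_le_iff (norm2_nonneg _)]
  intro i
  rw [Real.dist_eq]
  simpa using abs_le_norm2 (a - b) i

theorem ist_converges {m p : ℕ} (K : Matrix (Fin m) (Fin p) ℝ)
    (y : Fin m → ℝ) (lam : ℝ) (hlam : 0 < lam)
    (hinj : Function.Injective K.mulVec)
    (hK : ∃ c : ℝ, 0 ≤ c ∧ c < 1 ∧ ∀ x : Fin p → ℝ, norm2 (K.mulVec x) ≤ c * norm2 x)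
    (x : ℕ → Fin p → ℝ) (hx0 : x 0 = 0)
    (hxn : ∀ n, x (n + 1) = softV lam (x n + K.transpose.mulVec (y - K.mulVec (x n)))) :
    ∃ xbar : Fin p → ℝ,
      (∀ z, Fl K y lam xbar ≤ Fl K y lam z) ∧
      (∀ z, (∀ w, Fl K y lam z ≤ Fl K y lam w) → z = xbar) ∧
      Tendsto x atTop (nhds xbar) := by
  obtain ⟨c, hc0, hc1, hKc⟩ := hK
  obtain ⟨α₀, hα₀, hα₀K⟩ := exists_alpha hinj
  set α := min α₀ 1 with hα_def
  have hα : 0 < α := lt_min hα₀ one_pos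
  have hα1 : α ≤ 1 := min_le_right _ _
  have hαK : ∀ v : Fin p → ℝ, α * norm2 v ≤ norm2 (K.mulVec v) := fun v =>
    le_trans (mul_le_mul_of_nonneg_right (min_le_left _ _) (norm2_nonneg v)) (hα₀K v)
  set q := Real.sqrt (1 - α ^ 2) with hq_def
  have hq0 : 0 ≤ q := Real.sqrt_nonneg _
  have hq1 : q < 1 := by
    rw [hq_def, Real.sqrt_lt' one_pos]
    nlinarith
  have hcontract : ∀ a b, norm2 (Tmap K y lam a - Tmap K y lam b) ≤ q * norm2 (a - b) :=
    fun a b => contract_step K y hlam hc0 hc1 hKc hα hα1 hαK a b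
  have hxT : ∀ n, x (n + 1) = Tmap K y lam (x n) := fun n => hxn n
  -- geometric decay
  have hgeo : ∀ n, norm2 (x (n + 1) - x n) ≤ q ^ n * norm2 (x 1 - x 0) := by
    intro n
    induction n with
    | zero => simp
    | succ n ih =>
      have h1 : norm2 (x (n + 1 + 1) - x (n + 1)) ≤ q * norm2 (x (n + 1) - x n) := by
        have e := hcontract (x (n + 1)) (x n)
        rw [← hxT (n + 1), ← hxT n] at e
        exact e
      calc norm2 (x (n + 1 + 1) - x (n + 1)) ≤ q * norm2 (x (n + 1) - x n) := h1
      _ ≤ q * (q ^ n * norm2 (x 1 - x 0)) := by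
          apply mul_le_mul_of_nonneg_left ih hq0
      _ = q ^ (n + 1) * norm2 (x 1 - x 0) := by ring
  have hcauchy : CauchySeq x := by
    apply cauchySeq_of_le_geometric q (norm2 (x 1 - x 0)) hq1
    intro n
    calc dist (x n) (x (n + 1)) ≤ norm2 (x n - x (n + 1)) := dist_le_norm2 _ _
    _ = norm2 (x (n + 1) - x n) := norm2_sub_comm _ _
    _ ≤ q ^ n * norm2 (x 1 - x 0) := hgeo n
    _ = norm2 (x 1 - x 0) * q ^ n := by ring
  obtain ⟨xbar, hxbar⟩ := cauchySeq_tendsto_of_complete hcauchy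
  -- T is continuous
  have hcontS : Continuous (softS lam) := by
    have h : softS lam = fun u => u - max (-lam) (min lam u) := funext (softS_eq hlam.le)
    rw [h]
    exact continuous_id.sub (continuous_const.max (continuous_const.min continuous_id))
  have hcontT : Continuous (Tmap K y lam) := by
    unfold Tmap
    apply continuous_pi
    intro i
    apply hcontS.comp
    apply Continuous.comp (continuous_apply i)
    exact continuous_id.add (continuous_const.matrix_mulVec
      (continuous_const.sub (continuous_const.matrix_mulVec continuous_id)))
  -- fixed point
  have hfix : Tmap K y lam xbar = xbar := by
    have h1 : Tendsto (fun n => x (n + 1)) atTop (nhds xbar) :=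
      hxbar.comp (tendsto_add_atTop_nat 1)
    have h2 : Tendsto (fun n => Tmap K y lam (x n)) atTop (nhds (Tmap K y lam xbar)) :=
      (hcontT.tendsto xbar).comp hxbar
    have h3 : (fun n => x (n + 1)) = fun n => Tmap K y lam (x n) := funext fun n => hxT n
    rw [h3] at h1
    exact tendsto_nhds_unique h2 h1
  have hmin : ∀ z, Fl K y lam xbar + norm2 (K.mulVec (z - xbar)) ^ 2 ≤ Fl K y lam z :=
    fun z => fixed_point_min K y hlam hfix z
  refine ⟨xbar, fun z => ?_, fun z hz => ?_, hxbar⟩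
  · have := hmin z
    nlinarith [sq_nonneg (norm2 (K.mulVec (z - xbar)))]
  · have h1 := hz xbar
    have h2 := hmin z
    have h3 : norm2 (K.mulVec (z - xbar)) ^ 2 ≤ 0 := by linarith
    have h4 : norm2 (K.mulVec (z - xbar)) = 0 := by
      nlinarith [norm2_nonneg (K.mulVec (z - xbar))]
    have h5 : K.mulVec (z - xbar) = 0 := norm2_eq_zero h4
    have h6 : K.mulVec z = K.mulVec xbar := by
      rw [Matrix.mulVec_sub] at h5
      have := sub_eq_zero.mp h5
      exact this
    exact hinj h6
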